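/- arXiv:1208.5960 — 6 statements merged into one kernel-verified Lean document; each statement's English description precedes it below -/
import Mathlib

section
/- Let x, s ∈ ℝⁿ with x, s > 0, and suppose Δx, Δs ∈ ℝⁿ satisfy SΔx + XΔs = ξ + r (componentwise: s_j Δx_j + x_j Δs_j = ξ_j + r_j) and ΔxᵀΔs ≥ 0. Then ‖ΔXΔS e‖₁ = Σⱼ |Δx_j Δs_j| ≤ Σⱼ (x_j s_j)⁻¹ (ξ_j + r_j)². -/
/-!
Writing `a_j = Δx_j Δs_j`, the equation gives `(ξ_j + r_j)² = (s_j Δx_j + x_j Δs_j)² ≥ 4 x_j s_j a_j`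
(AM–GM), so each positive part `a_j⁺` is at most a quarter of the `j`-th term on the right.
Since `|a| = 2 a⁺ - a` and `∑ a_j ≥ 0`, the 1-norm of `a` is at most twice the sum of its positive
parts, hence at most half of the right-hand side.
-/

open Finset

theorem sum_abs_le_two_nsmul_sum_posPart {ι α : Type*} [AddCommGroup α] [LinearOrder α]
    [IsOrderedAddMonoid α] (t : Finset ι) (f : ι → α) (hf : 0 ≤ ∑ i ∈ t, f i) :
    ∑ i ∈ t, |f i| ≤ 2 • ∑ i ∈ t, (f i)⁺ := by
  have habs (a : α) : |a| = 2 • a⁺ - a :=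
    calc |a| = a⁺ + a⁻ := (posPart_add_negPart a).symm
      _ = 2 • a⁺ - (a⁺ - a⁻) := by abel
      _ = 2 • a⁺ - a := by rw [posPart_sub_negPart]
  simp only [habs, sum_sub_distrib, ← smul_sum]
  exact sub_le_self _ hf

theorem four_mul_mul_le_sq_add (x s a b : ℝ) : 4 * (x * s) * (a * b) ≤ (s * a + x * b) ^ 2 := by
  nlinarith [sq_nonneg (s * a - x * b)]

theorem posPart_mul_le_inv_mul_sq_add_div_four {x s a b : ℝ} (hx : 0 < x) (hs : 0 < s) :
    (a * b)⁺ ≤ (x * s)⁻¹ * (s * a + x * b) ^ 2 / 4 := by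
  have hxs : 0 < x * s := mul_pos hx hs
  refine sup_le ?_ (by positivity)
  rw [inv_mul_eq_div, div_div, mul_comm (x * s) 4, le_div_iff₀' (by positivity)]
  exact four_mul_mul_le_sq_add x s a b

/-- The 1-norm of the second-order term ΔXΔSe is bounded by
Σⱼ (xⱼsⱼ)⁻¹(ξⱼ+rⱼ)². -/
theorem second_order_term_one_norm_bound
    {n : ℕ} (x s dx ds ξ r : Fin n → ℝ)
    (hx : ∀ j, 0 < x j) (hs : ∀ j, 0 < s j)
    (heq : ∀ j, s j * dx j + x j * ds j = ξ j + r j)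
    (hdxds : 0 ≤ ∑ j, dx j * ds j) :
    ∑ j, |dx j * ds j| ≤ ∑ j, (x j * s j)⁻¹ * (ξ j + r j) ^ 2 := by
  have hrhs : 0 ≤ ∑ j, (x j * s j)⁻¹ * (ξ j + r j) ^ 2 :=
    sum_nonneg fun j _ => mul_nonneg (inv_nonneg.mpr (mul_pos (hx j) (hs j)).le) (sq_nonneg _)
  have hpos : ∑ j, (dx j * ds j)⁺ ≤ ∑ j, (x j * s j)⁻¹ * (ξ j + r j) ^ 2 / 4 :=
    sum_le_sum fun j _ => heq j ▸ posPart_mul_le_inv_mul_sq_add_div_four (hx j) (hs j)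
  calc ∑ j, |dx j * ds j| ≤ 2 • ∑ j, (dx j * ds j)⁺ := sum_abs_le_two_nsmul_sum_posPart _ _ hdxds
    _ ≤ 2 * ∑ j, (x j * s j)⁻¹ * (ξ j + r j) ^ 2 / 4 := by rw [two_nsmul, two_mul]; gcongr
    _ ≤ ∑ j, (x j * s j)⁻¹ * (ξ j + r j) ^ 2 := by rw [← sum_div]; linarith
end

section
/- Suppose (x,y,s) lies in N₂(θ) (i.e. feasible with ‖XSe - μe‖ ≤ θμ, μ = xᵀs/n > 0) and the inexact Newton direction (Δx, Δy, Δs) satisfies AΔx = 0, -QΔx + AᵀΔy + Δs = 0, SΔx + XΔs = ξ + r with ξ = σμe - XSe, σ = 1 - β/√n, and ‖r‖₂ ≤ δ‖ξ‖₂. Then ‖ΔXΔSe‖₂ ≤ (1+δ)²(θ² + β²)μ / (1-θ). -/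
/-!
The Newton system forces `Δxᵀ Δs = Δxᵀ Q Δx ≥ 0`. Coordinatewise, AM-GM applied to
`s_j Δx_j + x_j Δs_j = ξ_j + r_j` gives `4 x_j s_j Δx_j Δs_j ≤ (ξ_j + r_j)²`, and in `N₂(θ)`
every `x_j s_j ≥ (1 - θ) μ`. Since the products have nonnegative sum, their `ℓ¹` norm is at most
twice the sum of these upper bounds, which yields `‖ΔXΔSe‖₂ ≤ ‖ξ + r‖² / (2 (1 - θ) μ)`.
Finally `ξ` splits orthogonally into `-(XSe - μe)` and `-(β/√n) μ e`, so
`‖ξ‖² ≤ (θ² + β²) μ²`, and `‖ξ + r‖ ≤ (1 + δ) ‖ξ‖`.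
-/

open Matrix Finset

section SumSq

variable {ι : Type*} [Fintype ι]

lemma sqrt_sum_sq_le_sum_abs (v : ι → ℝ) : √(∑ i, v i ^ 2) ≤ ∑ i, |v i| := by
  rw [Real.sqrt_le_left (sum_nonneg fun i _ ↦ abs_nonneg _)]
  simpa only [sq_abs] using sum_sq_le_sq_sum_of_nonneg fun i _ ↦ abs_nonneg (v i)

lemma sqrt_sum_add_sq_le (u v : ι → ℝ) :
    √(∑ i, (u i + v i) ^ 2) ≤ √(∑ i, u i ^ 2) + √(∑ i, v i ^ 2) := by
  simpa [EuclideanSpace.norm_eq] using norm_add_le (WithLp.toLp 2 u) (WithLp.toLp 2 v)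

lemma sum_add_sq_le_of_sqrt_sum_sq_le {u v : ι → ℝ} {δ : ℝ}
    (h : √(∑ i, v i ^ 2) ≤ δ * √(∑ i, u i ^ 2)) :
    ∑ i, (u i + v i) ^ 2 ≤ (1 + δ) ^ 2 * ∑ i, u i ^ 2 := by
  have hle : √(∑ i, (u i + v i) ^ 2) ≤ (1 + δ) * √(∑ i, u i ^ 2) := by
    linarith [sqrt_sum_add_sq_le u v]
  rwa [Real.sqrt_le_left ((Real.sqrt_nonneg _).trans hle), mul_pow,
    Real.sq_sqrt (sum_nonneg fun i _ ↦ sq_nonneg _)] at hle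

lemma sum_abs_le_two_mul_sum_of_le {t c : ι → ℝ} (htc : ∀ i, t i ≤ c i) (hc : ∀ i, 0 ≤ c i)
    (ht : 0 ≤ ∑ i, t i) : ∑ i, |t i| ≤ 2 * ∑ i, c i :=
  calc ∑ i, |t i| ≤ ∑ i, (2 * c i - t i) :=
        sum_le_sum fun i _ ↦ abs_le.2 ⟨by linarith [hc i], by linarith [htc i]⟩
    _ = 2 * ∑ i, c i - ∑ i, t i := by rw [sum_sub_distrib, mul_sum]
    _ ≤ 2 * ∑ i, c i := by linarith

lemma sum_sq_sub_sub_eq {w : ι → ℝ} {μ : ℝ} (hmean : ∑ i, w i = Fintype.card ι * μ) (ε : ℝ) :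
    ∑ i, (μ - ε - w i) ^ 2 = ∑ i, (w i - μ) ^ 2 + Fintype.card ι * ε ^ 2 := by
  have hcross : ∑ i, ε * (w i - μ) = 0 := by
    rw [← mul_sum, sum_sub_distrib, hmean]; simp
  calc ∑ i, (μ - ε - w i) ^ 2 = ∑ i, ((w i - μ) ^ 2 + 2 * (ε * (w i - μ)) + ε ^ 2) :=
        sum_congr rfl fun i _ ↦ by ring
    _ = _ := by simp [sum_add_distrib, ← mul_sum, hcross]

end SumSq

section CentralPath

variable {ι : Type*} [Fintype ι] {w : ι → ℝ} {μ θ : ℝ}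

lemma one_sub_mul_le_of_sqrt_sum_sq_sub_le (h : √(∑ i, (w i - μ) ^ 2) ≤ θ * μ) (i : ι) :
    (1 - θ) * μ ≤ w i := by
  have hi : |w i - μ| ≤ θ * μ := by
    rw [← Real.sqrt_sq_eq_abs]
    refine (Real.sqrt_le_sqrt ?_).trans h
    exact single_le_sum (f := fun i ↦ (w i - μ) ^ 2) (fun i _ ↦ sq_nonneg _) (mem_univ i)
  linarith [(abs_le.1 hi).1]

lemma sum_sq_centering_residual_le {ξ : ι → ℝ} {β : ℝ} (hmean : ∑ i, w i = Fintype.card ι * μ)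
    (hN2 : √(∑ i, (w i - μ) ^ 2) ≤ θ * μ)
    (hξ : ∀ i, ξ i = (1 - β / √(Fintype.card ι)) * μ - w i) :
    ∑ i, ξ i ^ 2 ≤ (θ ^ 2 + β ^ 2) * μ ^ 2 := by
  set N : ℝ := (Fintype.card ι : ℝ)
  have hξ' : ∑ i, ξ i ^ 2 = ∑ i, (μ - β / √N * μ - w i) ^ 2 :=
    sum_congr rfl fun i _ ↦ by rw [hξ]; ring
  have hdev : ∑ i, (w i - μ) ^ 2 ≤ (θ * μ) ^ 2 :=
    (Real.sqrt_le_left ((Real.sqrt_nonneg _).trans hN2)).1 hN2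
  have hshift : N * (β / √N * μ) ^ 2 ≤ (β * μ) ^ 2 := by
    rcases eq_or_ne N 0 with hN | hN
    · simp [hN, sq_nonneg]
    · rw [div_mul_eq_mul_div, div_pow, Real.sq_sqrt (Nat.cast_nonneg _), mul_div_cancel₀ _ hN]
  rw [hξ', sum_sq_sub_sub_eq hmean]
  nlinarith

end CentralPath

lemma Matrix.PosSemidef.dotProduct_nonneg_of_newton {m n : Type*} [Fintype m] [Fintype n]
    {A : Matrix m n ℝ} {Q : Matrix n n ℝ} (hQ : Q.PosSemidef) {dx ds : n → ℝ} {dy : m → ℝ}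
    (h1 : A *ᵥ dx = 0) (h2 : -(Q *ᵥ dx) + Aᵀ *ᵥ dy + ds = 0) : 0 ≤ dx ⬝ᵥ ds := by
  have hds : ds = Q *ᵥ dx - Aᵀ *ᵥ dy := by
    rw [← sub_eq_zero, ← h2]; abel
  rw [hds, dotProduct_sub, dotProduct_mulVec dx Aᵀ, vecMul_transpose, h1, zero_dotProduct,
    sub_zero]
  simpa using hQ.dotProduct_mulVec_nonneg dx

section Products

variable {ι : Type*} [Fintype ι] {x s dx ds : ι → ℝ} {L : ℝ}

lemma mul_le_sq_add_div_of_le_mul {x s dx ds L : ℝ} (hL : 0 < L) (hxs : L ≤ x * s) :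
    dx * ds ≤ (s * dx + x * ds) ^ 2 / (4 * L) := by
  rw [le_div_iff₀ (by positivity)]
  rcases le_or_gt 0 (dx * ds) with hd | hd
  · calc dx * ds * (4 * L) ≤ 4 * (s * dx) * (x * ds) := by nlinarith
      _ ≤ _ := four_mul_le_sq_add _ _
  · nlinarith [sq_nonneg (s * dx + x * ds)]

lemma sqrt_sum_sq_mul_le_of_dotProduct_nonneg (hL : 0 < L) (hxs : ∀ i, L ≤ x i * s i)
    (hd : 0 ≤ dx ⬝ᵥ ds) :
    √(∑ i, (dx i * ds i) ^ 2) ≤ (∑ i, (s i * dx i + x i * ds i) ^ 2) / (2 * L) :=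
  calc √(∑ i, (dx i * ds i) ^ 2) ≤ ∑ i, |dx i * ds i| := sqrt_sum_sq_le_sum_abs _
    _ ≤ 2 * ∑ i, (s i * dx i + x i * ds i) ^ 2 / (4 * L) :=
        sum_abs_le_two_mul_sum_of_le (fun i ↦ mul_le_sq_add_div_of_le_mul hL (hxs i))
          (fun i ↦ by positivity) hd
    _ = _ := by rw [← sum_div]; field_simp; ring

end Products

theorem dXdSe_two_norm_bound_short_step_general
    {m n : ℕ}
    (A : Matrix (Fin m) (Fin n) ℝ) (Q : Matrix (Fin n) (Fin n) ℝ)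
    (hQ : Q.PosSemidef)
    (x s dx ds ξ r : Fin n → ℝ) (dy : Fin m → ℝ) (μ θ β δ σ : ℝ)
    (hμ : μ = (∑ j, x j * s j) / n) (hμpos : 0 < μ)
    (hθ : θ ∈ Set.Ioo (0 : ℝ) 1)
    (hN2 : Real.sqrt (∑ j, (x j * s j - μ) ^ 2) ≤ θ * μ)
    (hσ : σ = 1 - β / Real.sqrt n)
    (hξ : ∀ j, ξ j = σ * μ - x j * s j)
    (h1 : A.mulVec dx = 0)
    (h2 : -(Q.mulVec dx) + Aᵀ.mulVec dy + ds = 0)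
    (h3 : ∀ j, s j * dx j + x j * ds j = ξ j + r j)
    (hr : Real.sqrt (∑ j, (r j) ^ 2) ≤ δ * Real.sqrt (∑ j, (ξ j) ^ 2)) :
    Real.sqrt (∑ j, (dx j * ds j) ^ 2)
      ≤ (1 + δ) ^ 2 * (θ ^ 2 + β ^ 2) * μ / (1 - θ) := by
  have hθ1 : 0 < 1 - θ := sub_pos.2 hθ.2
  have hn : (n : ℝ) ≠ 0 := by rintro h; rw [h, div_zero] at hμ; linarith
  have hmean : ∑ j, x j * s j = Fintype.card (Fin n) * μ := by
    rw [Fintype.card_fin, hμ]; field_simp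
  have hξμ : ∑ j, ξ j ^ 2 ≤ (θ ^ 2 + β ^ 2) * μ ^ 2 :=
    sum_sq_centering_residual_le hmean hN2 (by simpa [← hσ] using hξ)
  calc √(∑ j, (dx j * ds j) ^ 2)
      ≤ (∑ j, (s j * dx j + x j * ds j) ^ 2) / (2 * ((1 - θ) * μ)) :=
        sqrt_sum_sq_mul_le_of_dotProduct_nonneg (mul_pos hθ1 hμpos)
          (one_sub_mul_le_of_sqrt_sum_sq_sub_le hN2) (hQ.dotProduct_nonneg_of_newton h1 h2)
    _ = (∑ j, (ξ j + r j) ^ 2) / (2 * ((1 - θ) * μ)) := by simp only [h3]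
    _ ≤ (1 + δ) ^ 2 * ((θ ^ 2 + β ^ 2) * μ ^ 2) / (2 * ((1 - θ) * μ)) := by
        gcongr
        exact (sum_add_sq_le_of_sqrt_sum_sq_le hr).trans (by gcongr)
    _ = (1 + δ) ^ 2 * (θ ^ 2 + β ^ 2) * μ / (1 - θ) / 2 := by field_simp
    _ ≤ _ := half_le_self (div_nonneg (by positivity) hθ1.le)

/-- Lemma 3.1 (short-step): bound on ‖ΔXΔSe‖₂ for the inexact Newton direction. -/
theorem dXdSe_two_norm_bound_short_step
    {m n : ℕ} (hn : 0 < n)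
    (A : Matrix (Fin m) (Fin n) ℝ) (Q : Matrix (Fin n) (Fin n) ℝ)
    (hQ : Q.PosSemidef)
    (x s dx ds ξ r : Fin n → ℝ) (dy : Fin m → ℝ) (μ θ β δ σ : ℝ)
    (hx : ∀ j, 0 < x j) (hs : ∀ j, 0 < s j)
    (hμ : μ = (∑ j, x j * s j) / n) (hμpos : 0 < μ)
    (hθ : θ ∈ Set.Ioo (0 : ℝ) 1) (hβ : β ∈ Set.Ioo (0 : ℝ) 1)
    (hδ : δ ∈ Set.Ioo (0 : ℝ) 1)
    (hN2 : Real.sqrt (∑ j, (x j * s j - μ) ^ 2) ≤ θ * μ)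
    (hσ : σ = 1 - β / Real.sqrt n)
    (hξ : ∀ j, ξ j = σ * μ - x j * s j)
    (h1 : A.mulVec dx = 0)
    (h2 : -(Q.mulVec dx) + Aᵀ.mulVec dy + ds = 0)
    (h3 : ∀ j, s j * dx j + x j * ds j = ξ j + r j)
    (hr : Real.sqrt (∑ j, (r j) ^ 2) ≤ δ * Real.sqrt (∑ j, (ξ j) ^ 2)) :
    Real.sqrt (∑ j, (dx j * ds j) ^ 2)
      ≤ (1 + δ) ^ 2 * (θ ^ 2 + β ^ 2) * μ / (1 - θ) :=
  dXdSe_two_norm_bound_short_step_general A Q hQ x s dx ds ξ r dy μ θ β δ σ hμ hμpos hθ hN2 hσ hξ h1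
    h2 h3 hr
end

section
/- Under the hypotheses of the short-step method with θ = β = 0.1, δ = 0.3, σ = 1 - β/√n, after a full Newton step (α = 1), the new average complementarity gap satisfies μ̄ = σμ + eᵀr/n + ΔxᵀΔs/n ≤ (1 - 0.002/√n)·μ. -/
/-! With `s = √n`, the full step changes the gap by `-βμ/s` from centring and by at most
`√2δθμ/s + 0.38βμ/s` from the residual and the second-order term, a net decrease of
`(0.62β - √2δθ)μ/s`; for `β = θ = 0.1`, `δ = 0.3` this is at least `0.002μ/s` since `√2 < 3/2`. -/

theorem full_step_gap_le {μ β θ δ s a b : ℝ}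
    (ha : |a| ≤ √2 * δ * θ * μ / s) (hb : b ≤ 0.38 * β * μ / s) :
    (1 - β / s) * μ + a + b ≤ (1 - (0.62 * β - √2 * δ * θ) / s) * μ := by
  have ha' := (le_abs_self a).trans ha
  calc (1 - β / s) * μ + a + b
      ≤ (1 - β / s) * μ + √2 * δ * θ * μ / s + 0.38 * β * μ / s := by linarith
    _ = (1 - (0.62 * β - √2 * δ * θ) / s) * μ := by ring

theorem short_step_decrease_coeff : (0.002 : ℝ) ≤ 0.62 * 0.1 - √2 * 0.3 * 0.1 := by
  linarith [Real.sqrt_two_lt_three_halves]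

theorem full_step_gap_reduction_short_step_general
    {n : ℕ} (dx ds r : Fin n → ℝ) (μ σ : ℝ)
    (hμpos : 0 < μ)
    (hσ : σ = 1 - 0.1 / Real.sqrt n)
    (hetr : |(∑ j, r j) / n| ≤ Real.sqrt 2 * 0.3 * 0.1 * μ / Real.sqrt n)
    (hdxds : (∑ j, dx j * ds j) / n ≤ 0.38 * 0.1 * μ / Real.sqrt n) :
    σ * μ + (∑ j, r j) / n + (∑ j, dx j * ds j) / n
      ≤ (1 - 0.002 / Real.sqrt n) * μ := by
  rw [hσ]
  refine (full_step_gap_le hetr hdxds).trans ?_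
  gcongr
  exact short_step_decrease_coeff

/-- After a full Newton step in the short-step method, the new average
complementarity gap satisfies μ̄ ≤ (1 - 0.002/√n)μ. -/
theorem full_step_gap_reduction_short_step
    {n : ℕ} (hn : 2 ≤ n) (dx ds r : Fin n → ℝ) (μ σ : ℝ)
    (hμpos : 0 < μ)
    (hσ : σ = 1 - 0.1 / Real.sqrt n)
    (hetr : |(∑ j, r j) / n| ≤ Real.sqrt 2 * 0.3 * 0.1 * μ / Real.sqrt n)
    (hdxds : (∑ j, dx j * ds j) / n ≤ 0.38 * 0.1 * μ / Real.sqrt n) :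
    σ * μ + (∑ j, r j) / n + (∑ j, dx j * ds j) / n
      ≤ (1 - 0.002 / Real.sqrt n) * μ :=
  full_step_gap_reduction_short_step_general dx ds r μ σ hμpos hσ hetr hdxds
end

section
/- Let (x,y,s) ∈ N_S(γ) (γμ ≤ x_j s_j ≤ μ/γ for all j, μ = xᵀs/n > 0) and suppose (Δx,Δy,Δs) solves the inexact Newton system with ξ = σμe - XSe, ‖r‖_∞ ≤ δ‖ξ‖_∞, and ΔxᵀΔs ≥ 0. Then ‖ΔXΔSe‖_∞ ≤ ‖ΔXΔSe‖₁ ≤ n·(1+δ)²·(1/γ - σ)²·μ / γ, and moreover for every j, Δx_j Δs_j ≤ ((1+δ)²/γ)(1/γ - σ)²μ. -/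
open Finset

set_option maxHeartbeats 1000000 in
/-- Lemma 3.4 (long-step): bounds on the second-order term for the inexact
Newton direction in the symmetric neighbourhood N_S(γ). -/
theorem dXdSe_bounds_long_step
    {n : ℕ} (hn : 0 < n)
    (x s dx ds ξ r : Fin n → ℝ) (μ γ σ δ : ℝ)
    (hx : ∀ j, 0 < x j) (hs : ∀ j, 0 < s j)
    (hμ : μ = (∑ j, x j * s j) / n) (hμpos : 0 < μ)
    (hγ : γ ∈ Set.Ioo (0 : ℝ) 1) (hσ : σ ∈ Set.Ioo (0 : ℝ) 1)
    (hδ : δ ∈ Set.Ioo (0 : ℝ) 1)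
    (hNS : ∀ j, γ * μ ≤ x j * s j ∧ x j * s j ≤ μ / γ)
    (hξ : ∀ j, ξ j = σ * μ - x j * s j)
    (h3 : ∀ j, s j * dx j + x j * ds j = ξ j + r j)
    (hr : (⨆ j, |r j|) ≤ δ * ⨆ j, |ξ j|)
    (hdxds : 0 ≤ ∑ j, dx j * ds j) :
    (⨆ j, |dx j * ds j|) ≤ ∑ j, |dx j * ds j| ∧
    ∑ j, |dx j * ds j| ≤ n * ((1 + δ) ^ 2 / γ) * (1 / γ - σ) ^ 2 * μ ∧
    ∀ j, dx j * ds j ≤ ((1 + δ) ^ 2 / γ) * (1 / γ - σ) ^ 2 * μ := by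
  classical
  have hne : Nonempty (Fin n) := ⟨⟨0, hn⟩⟩
  obtain ⟨hγ0, hγ1⟩ := hγ
  obtain ⟨hσ0, hσ1⟩ := hσ
  obtain ⟨hδ0, hδ1⟩ := hδ
  set a : ℝ := 1 / γ with ha
  have hγa : γ * a = 1 := mul_one_div_cancel hγ0.ne'
  have ha0 : 0 < a := by rw [ha]; positivity
  have h1a : 1 < a := by nlinarith
  have haσ : 0 < a - σ := by linarith
  set K : ℝ := (a - σ) * μ with hK
  have hK0 : 0 < K := by positivity
  set B : ℝ := ((1 + δ) ^ 2 / γ) * (a - σ) ^ 2 * μ with hB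
  have hBa : B = (1 + δ) ^ 2 * a * (a - σ) ^ 2 * μ := by
    rw [hB, ha]; ring
  have hBnn : 0 ≤ B := by
    rw [hBa]; positivity
  -- bound on ξ
  have hξK : ∀ j, |ξ j| ≤ K := by
    intro j
    obtain ⟨hl, hu⟩ := hNS j
    have hu' : x j * s j * γ ≤ μ := by
      rwa [le_div_iff₀ hγ0] at hu
    rw [hξ j, abs_le, hK]
    constructor
    · nlinarith [mul_le_mul_of_nonneg_left hu' ha0.le]
    · nlinarith [mul_nonneg ha0.le (sq_nonneg (γ - 1)), mul_pos hγ0 hμpos]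
  have hξsup : (⨆ j, |ξ j|) ≤ K := ciSup_le hξK
  have hrK : ∀ j, |r j| ≤ δ * K := by
    intro j
    calc |r j| ≤ ⨆ i, |r i| :=
          le_ciSup (f := fun i => |r i|) (Set.Finite.bddAbove (Set.finite_range _)) j
      _ ≤ δ * ⨆ i, |ξ i| := hr
      _ ≤ δ * K := mul_le_mul_of_nonneg_left hξsup hδ0.le
  have hξrK : ∀ j, |ξ j + r j| ≤ (1 + δ) * K := by
    intro j
    calc |ξ j + r j| ≤ |ξ j| + |r j| := abs_add_le _ _
      _ ≤ (1 + δ) * K := by nlinarith [hξK j, hrK j]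
  -- key componentwise bound
  have hkey : ∀ j, dx j * ds j ≤ B / 2 := by
    intro j
    have e2 : (s j * dx j + x j * ds j) ^ 2 = (ξ j + r j) ^ 2 := by rw [h3 j]
    have h4 : 4 * (x j * s j) * (dx j * ds j) ≤ (ξ j + r j) ^ 2 := by
      nlinarith [sq_nonneg (s j * dx j - x j * ds j)]
    have hsq : (ξ j + r j) ^ 2 ≤ ((1 + δ) * K) ^ 2 := by
      rw [← sq_abs]
      exact pow_le_pow_left₀ (abs_nonneg _) (hξrK j) 2
    rcases le_or_gt (dx j * ds j) 0 with h | h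
    · linarith
    · have hl := (hNS j).1
      have h5 : 4 * (γ * μ) * (dx j * ds j) ≤ 4 * (x j * s j) * (dx j * ds j) :=
        mul_le_mul_of_nonneg_right
          (mul_le_mul_of_nonneg_left hl (by norm_num : (0:ℝ) ≤ 4)) h.le
    -- 4 γ μ (dx ds) ≤ (1+δ)^2 K^2 = (1+δ)^2 (a-σ)^2 μ^2
      have h6 : 4 * (γ * μ) * (dx j * ds j) ≤ (1 + δ) ^ 2 * (a - σ) ^ 2 * μ ^ 2 := by
        calc 4 * (γ * μ) * (dx j * ds j) ≤ ((1 + δ) * K) ^ 2 := by linarith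
          _ = (1 + δ) ^ 2 * (a - σ) ^ 2 * μ ^ 2 := by rw [hK]; ring
      have h7 : 4 * (γ * μ) * (dx j * ds j) ≤ 2 * (1 + δ) ^ 2 * (a - σ) ^ 2 * μ ^ 2 := by
        have hnn : (0:ℝ) ≤ (1 + δ) ^ 2 * (a - σ) ^ 2 * μ ^ 2 := by positivity
        have hKe : ((1 + δ) * K) ^ 2 = (1 + δ) ^ 2 * (a - σ) ^ 2 * μ ^ 2 := by
          rw [hK]; ring
        linarith
      have hpos : (0:ℝ) < 4 * (γ * μ) := by positivity
      rw [hBa]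
      have goal' : 4 * (γ * μ) * (dx j * ds j) ≤
          4 * (γ * μ) * ((1 + δ) ^ 2 * a * (a - σ) ^ 2 * μ / 2) := by
        have hR : 4 * (γ * μ) * ((1 + δ) ^ 2 * a * (a - σ) ^ 2 * μ / 2) =
            2 * ((γ * a) * ((1 + δ) ^ 2 * (a - σ) ^ 2 * μ ^ 2)) := by ring
        rw [hR, hγa, one_mul]
        linarith
      exact le_of_mul_le_mul_left goal' hpos
  -- the sum bound
  set t : Fin n → ℝ := fun j => dx j * ds j with ht
  have hsum : ∑ j, |t j| ≤ n * B := by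
    have hsplit := Finset.sum_filter_add_sum_filter_not Finset.univ (fun j => 0 ≤ t j)
      (fun j => |t j|)
    set P := Finset.univ.filter (fun j => 0 ≤ t j) with hP
    set Q := Finset.univ.filter (fun j => ¬ 0 ≤ t j) with hQ
    have hPe : ∑ j ∈ P, |t j| = ∑ j ∈ P, t j :=
      Finset.sum_congr rfl fun j hj => abs_of_nonneg (Finset.mem_filter.mp hj).2
    have hQe : ∑ j ∈ Q, |t j| = ∑ j ∈ Q, (-t j) :=
      Finset.sum_congr rfl fun j hj =>
        abs_of_neg (lt_of_not_ge (Finset.mem_filter.mp hj).2)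
    have htot : ∑ j ∈ P, t j + ∑ j ∈ Q, t j = ∑ j, t j :=
      Finset.sum_filter_add_sum_filter_not Finset.univ (fun j => 0 ≤ t j) t
    have hPb : ∑ j ∈ P, t j ≤ P.card * (B / 2) := by
      calc ∑ j ∈ P, t j ≤ ∑ _j ∈ P, (B / 2) := Finset.sum_le_sum fun j _ => hkey j
        _ = P.card * (B / 2) := by rw [Finset.sum_const, nsmul_eq_mul]
    have hcard : (P.card : ℝ) ≤ n := by
      exact_mod_cast (Finset.card_le_univ P).trans_eq (by simp)
    have hQsum : ∑ j ∈ Q, (-t j) ≤ ∑ j ∈ P, t j := by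
      have := hdxds
      rw [ht] at htot ⊢
      simp only [Finset.sum_neg_distrib]
      linarith [htot, hdxds]
    have hcb : (P.card : ℝ) * (B / 2) ≤ n * (B / 2) :=
      mul_le_mul_of_nonneg_right hcard (by linarith)
    calc ∑ j, |t j| = ∑ j ∈ P, |t j| + ∑ j ∈ Q, |t j| := hsplit.symm
      _ = ∑ j ∈ P, t j + ∑ j ∈ Q, (-t j) := by rw [hPe, hQe]
      _ ≤ 2 * (P.card * (B / 2)) := by linarith
      _ ≤ n * B := by linarith
  have hsup : (⨆ j, |t j|) ≤ ∑ j, |t j| :=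
    ciSup_le fun j => Finset.single_le_sum (fun i _ => abs_nonneg (t i)) (Finset.mem_univ j)
  refine ⟨hsup, ?_, fun j => (hkey j).trans (by linarith)⟩
  calc ∑ j, |t j| ≤ n * B := hsum
    _ = n * ((1 + δ) ^ 2 / γ) * (1 / γ - σ) ^ 2 * μ := by rw [hB, ha]; ring
end

section
/- Let (x,y,s) ∈ N_S(γ), μ = xᵀs/n > 0, and let (Δx,Δy,Δs) be an inexact Newton direction with SΔx + XΔs = σμe - XSe + r, ‖r‖_∞ ≤ δ(1/γ - σ)μ, ΔxᵀΔs ≥ 0, and the bounds of Lemma 3.4 holding. If α ∈ (0,1] satisfies α(γ+n)((1+δ)²/γ)(1/γ-σ)² ≤ σ(1-γ) - δ(1+γ)(1/γ-σ) and δ(1+1/γ)(1/γ-σ) + α((1+δ)²/γ)(1/γ-σ)² ≤ (1/γ - 1)σ, then the new point (x+αΔx, s+αΔs) satisfies γμ(α) ≤ x_j(α)s_j(α) ≤ μ(α)/γ for all j, where μ(α) = (x+αΔx)ᵀ(s+αΔs)/n. -/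
/-!
Along the step, each product `x_j(α) s_j(α)` is `(1 - α) x_j s_j + α σ μ` perturbed by the
residual term `α r_j` and the second-order term `α² Δx_j Δs_j`, and their mean `μ(α)` has the same
form with the means of `r` and of `Δx Δs`. The gaps `x_j s_j - γ μ` and `μ - γ x_j s_j` of the old
point are nonnegative, and the centring term `σ μ` adds the slack `(1 - γ) σ μ` to the new gaps.
The residual uses up at most `(1 + γ) δ (1/γ - σ) μ` of this slack, the second-order term at most
`α (n + γ) C μ` (lower gap) or `α γ C μ` (upper gap), where `C = (1 + δ)²/γ · (1/γ - σ)²`; the two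
stepsize conditions say exactly that the slack covers both.
-/

open Finset

def stepProduct {R : Type*} [CommRing R] (α c v r d : R) : R :=
  (1 - α) * v + α * c + α * r + α ^ 2 * d

theorem step_mul_step_eq {R : Type*} [CommRing R] {x s dx ds c r α : R}
    (h : s * dx + x * ds = c - x * s + r) :
    (x + α * dx) * (s + α * ds) = stepProduct α c (x * s) r (dx * ds) := by
  unfold stepProduct
  linear_combination α * h

section Mean

variable {ι : Type*} [Fintype ι]

theorem sum_step_mul_step_div_card [Nonempty ι] {x s dx ds r : ι → ℝ} {c μ α : ℝ}
    (hμ : μ = (∑ i, x i * s i) / Fintype.card ι)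
    (h : ∀ i, s i * dx i + x i * ds i = c - x i * s i + r i) :
    (∑ i, (x i + α * dx i) * (s i + α * ds i)) / Fintype.card ι
      = stepProduct α c μ ((∑ i, r i) / Fintype.card ι)
          ((∑ i, dx i * ds i) / Fintype.card ι) := by
  have hN : (Fintype.card ι : ℝ) ≠ 0 := by positivity
  simp_rw [step_mul_step_eq (h _), stepProduct, sum_add_distrib, ← mul_sum, sum_const,
    card_univ, nsmul_eq_mul]
  rw [hμ]
  field_simp

theorem abs_sum_div_card_le [Nonempty ι] {f : ι → ℝ} {b : ℝ} (h : ∀ i, |f i| ≤ b) :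
    |(∑ i, f i) / Fintype.card ι| ≤ b := by
  rw [abs_div, Nat.abs_cast, div_le_iff₀ (by positivity)]
  calc |∑ i, f i| ≤ ∑ i, |f i| := abs_sum_le_sum_abs _ _
    _ ≤ Fintype.card ι • b := by simpa using sum_le_card_nsmul univ _ b fun i _ => h i
    _ = b * Fintype.card ι := by rw [nsmul_eq_mul, mul_comm]

theorem sum_div_card_le_of_sum_abs_le [Nonempty ι] {f : ι → ℝ} {b : ℝ}
    (h : ∑ i, |f i| ≤ Fintype.card ι * b) : (∑ i, f i) / Fintype.card ι ≤ b := by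
  rw [div_le_iff₀ (by positivity), mul_comm]
  exact (abs_sum_le_sum_abs f univ).trans' (le_abs_self _) |>.trans h

theorem neg_le_of_sum_abs_le {f : ι → ℝ} {B : ℝ} (h : ∑ i, |f i| ≤ B) (j : ι) :
    -B ≤ f j := by
  have := single_le_sum (f := fun i => |f i|) (fun i _ => abs_nonneg _) (mem_univ j)
  linarith [neg_abs_le (f j)]

end Mean

theorem mul_stepProduct_le_stepProduct {α γ c μ w r r' d d' ρ K : ℝ}
    (hα0 : 0 ≤ α) (hα1 : α ≤ 1) (hγ : 0 ≤ γ) (hw : γ * μ ≤ w) (hr : |r| ≤ ρ) (hr' : |r'| ≤ ρ)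
    (hd : -K ≤ d - γ * d') (hK : (1 + γ) * ρ + α * K ≤ (1 - γ) * c) :
    γ * stepProduct α c μ r' d' ≤ stepProduct α c w r d := by
  have hr_gap : -((1 + γ) * ρ) ≤ r - γ * r' := by
    have := mul_le_mul_of_nonneg_left (le_of_abs_le hr') hγ
    linarith [neg_le_of_abs_le hr]
  have hslack : 0 ≤ (1 - γ) * c + (r - γ * r') + α * (d - γ * d') := by
    linarith [mul_le_mul_of_nonneg_left hd hα0]
  have hgap := add_nonneg (mul_nonneg (sub_nonneg.2 hα1) (sub_nonneg.2 hw))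
    (mul_nonneg hα0 hslack)
  unfold stepProduct
  linarith

theorem long_step_stays_in_NS_general
    {n : ℕ} (hn : 0 < n)
    (x s dx ds r : Fin n → ℝ) (μ γ σ δ α : ℝ)
    (hμ : μ = (∑ j, x j * s j) / n) (hμpos : 0 < μ)
    (hγ : γ ∈ Set.Ioo (0 : ℝ) 1)
    (hNS : ∀ j, γ * μ ≤ x j * s j ∧ x j * s j ≤ μ / γ)
    (h3 : ∀ j, s j * dx j + x j * ds j = σ * μ - x j * s j + r j)
    (hr : ∀ j, |r j| ≤ δ * (1 / γ - σ) * μ)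
    (hdxds : 0 ≤ ∑ j, dx j * ds j)
    (hd1 : ∑ j, |dx j * ds j| ≤ n * ((1 + δ) ^ 2 / γ) * (1 / γ - σ) ^ 2 * μ)
    (hd2 : ∀ j, dx j * ds j ≤ ((1 + δ) ^ 2 / γ) * (1 / γ - σ) ^ 2 * μ)
    (hα : α ∈ Set.Ioc (0 : ℝ) 1)
    (hcnd1 : α * (γ + n) * ((1 + δ) ^ 2 / γ) * (1 / γ - σ) ^ 2
        ≤ σ * (1 - γ) - δ * (1 + γ) * (1 / γ - σ))
    (hcnd2 : δ * (1 + 1 / γ) * (1 / γ - σ)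
        + α * ((1 + δ) ^ 2 / γ) * (1 / γ - σ) ^ 2 ≤ (1 / γ - 1) * σ) :
    ∀ j, γ * ((∑ i, (x i + α * dx i) * (s i + α * ds i)) / n)
          ≤ (x j + α * dx j) * (s j + α * ds j) ∧
        (x j + α * dx j) * (s j + α * ds j)
          ≤ ((∑ i, (x i + α * dx i) * (s i + α * ds i)) / n) / γ := by
  obtain ⟨hγ0, -⟩ := hγ
  obtain ⟨hα0, hα1⟩ := hα
  have : Nonempty (Fin n) := ⟨⟨0, hn⟩⟩
  set C := (1 + δ) ^ 2 / γ * (1 / γ - σ) ^ 2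
  set ρ := δ * (1 / γ - σ) * μ
  have hd_sum : ∑ i, |dx i * ds i| ≤ n * (C * μ) := hd1.trans_eq (by ring)
  have hmean := sum_step_mul_step_div_card (α := α) (μ := μ) (by rwa [Fintype.card_fin]) h3
  have hr_mean := abs_sum_div_card_le hr
  have hd_mean := sum_div_card_le_of_sum_abs_le (f := fun i => dx i * ds i)
    (by rwa [Fintype.card_fin])
  simp only [Fintype.card_fin] at hmean hr_mean hd_mean
  have hslack_lower : (1 + γ) * ρ + α * ((n + γ) * (C * μ)) ≤ (1 - γ) * (σ * μ) := by
    linarith [mul_le_mul_of_nonneg_right hcnd1 hμpos.le]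
  have hslack_upper : (1 + γ) * ρ + α * (γ * (C * μ)) ≤ (1 - γ) * (σ * μ) := by
    calc _ = γ * μ * (δ * (1 + 1 / γ) * (1 / γ - σ)
            + α * ((1 + δ) ^ 2 / γ) * (1 / γ - σ) ^ 2) := by
          simp only [C, ρ]; field_simp; ring
      _ ≤ γ * μ * ((1 / γ - 1) * σ) := by gcongr
      _ = _ := by field_simp
  intro j
  rw [hmean, step_mul_step_eq (h3 j), le_div_iff₀ hγ0, mul_comm _ γ]
  refine ⟨mul_stepProduct_le_stepProduct hα0.le hα1 hγ0.le (hNS j).1 (hr j) hr_mean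
      ?_ hslack_lower,
    mul_stepProduct_le_stepProduct hα0.le hα1 hγ0.le ((le_div_iff₀' hγ0).1 (hNS j).2) hr_mean
      (hr j) ?_ hslack_upper⟩
  · linarith [neg_le_of_sum_abs_le hd_sum j, mul_le_mul_of_nonneg_left hd_mean hγ0.le]
  · linarith [mul_le_mul_of_nonneg_left (hd2 j) hγ0.le, div_nonneg hdxds (Nat.cast_nonneg n)]

/-- Lemma 3.5: under the stepsize conditions, the new iterate stays in the
symmetric neighbourhood N_S(γ). -/
theorem long_step_stays_in_NS
    {n : ℕ} (hn : 0 < n)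
    (x s dx ds r : Fin n → ℝ) (μ γ σ δ α : ℝ)
    (hx : ∀ j, 0 < x j) (hs : ∀ j, 0 < s j)
    (hμ : μ = (∑ j, x j * s j) / n) (hμpos : 0 < μ)
    (hγ : γ ∈ Set.Ioo (0 : ℝ) 1) (hσ : σ ∈ Set.Ioo (0 : ℝ) 1)
    (hδ : δ ∈ Set.Ioo (0 : ℝ) 1)
    (hNS : ∀ j, γ * μ ≤ x j * s j ∧ x j * s j ≤ μ / γ)
    (h3 : ∀ j, s j * dx j + x j * ds j = σ * μ - x j * s j + r j)
    (hr : ∀ j, |r j| ≤ δ * (1 / γ - σ) * μ)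
    (hdxds : 0 ≤ ∑ j, dx j * ds j)
    (hd1 : ∑ j, |dx j * ds j| ≤ n * ((1 + δ) ^ 2 / γ) * (1 / γ - σ) ^ 2 * μ)
    (hd2 : ∀ j, dx j * ds j ≤ ((1 + δ) ^ 2 / γ) * (1 / γ - σ) ^ 2 * μ)
    (hα : α ∈ Set.Ioc (0 : ℝ) 1)
    (hcnd1 : α * (γ + n) * ((1 + δ) ^ 2 / γ) * (1 / γ - σ) ^ 2
        ≤ σ * (1 - γ) - δ * (1 + γ) * (1 / γ - σ))
    (hcnd2 : δ * (1 + 1 / γ) * (1 / γ - σ)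
        + α * ((1 + δ) ^ 2 / γ) * (1 / γ - σ) ^ 2 ≤ (1 / γ - 1) * σ) :
    ∀ j, γ * ((∑ i, (x i + α * dx i) * (s i + α * ds i)) / n)
          ≤ (x j + α * dx j) * (s j + α * ds j) ∧
        (x j + α * dx j) * (s j + α * ds j)
          ≤ ((∑ i, (x i + α * dx i) * (s i + α * ds i)) / n) / γ :=
  long_step_stays_in_NS_general hn x s dx ds r μ γ σ δ α hμ hμpos hγ hNS h3 hr hdxds hd1 hd2 hα
    hcnd1 hcnd2
end

section
/- Under the long-step assumptions, if α ∈ (0,1] satisfies σ + δ(1/γ - σ) + α((1+δ)²/γ)(1/γ - σ)² ≤ 0.9, then μ(α) = (1 - α(1-σ))μ + α·eᵀr/n + α²·ΔxᵀΔs/n ≤ (1 - 0.1α)·μ. -/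
theorem gap_update_le_of_bounds {μ σ α S D c B ρ : ℝ} (hμ : 0 ≤ μ) (hα : 0 ≤ α)
    (hS : S ≤ c * μ) (hD : D ≤ B * μ) (hρ : σ + c + α * B ≤ ρ) :
    (1 - α * (1 - σ)) * μ + α * S + α ^ 2 * D ≤ (1 - α * (1 - ρ)) * μ :=
  calc (1 - α * (1 - σ)) * μ + α * S + α ^ 2 * D
      ≤ (1 - α * (1 - σ)) * μ + α * (c * μ) + α ^ 2 * (B * μ) := by gcongr
    _ = (1 - α) * μ + α * μ * (σ + c + α * B) := by ring
    _ ≤ (1 - α) * μ + α * μ * ρ := by gcongr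
    _ = (1 - α * (1 - ρ)) * μ := by ring

theorem long_step_gap_reduction_general
    {n : ℕ} (dx ds r : Fin n → ℝ) (μ γ σ δ α : ℝ)
    (hμpos : 0 < μ)
    (hα : α ∈ Set.Ioc (0 : ℝ) 1)
    (hetr : |(∑ j, r j) / n| ≤ δ * (1 / γ - σ) * μ)
    (hdxds1 : (∑ j, dx j * ds j) / n ≤ ((1 + δ) ^ 2 / γ) * (1 / γ - σ) ^ 2 * μ)
    (hcnd : σ + δ * (1 / γ - σ) + α * ((1 + δ) ^ 2 / γ) * (1 / γ - σ) ^ 2 ≤ 0.9) :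
    (1 - α * (1 - σ)) * μ + α * ((∑ j, r j) / n)
        + α ^ 2 * ((∑ j, dx j * ds j) / n)
      ≤ (1 - 0.1 * α) * μ :=
  calc _ ≤ (1 - α * (1 - 0.9)) * μ :=
        gap_update_le_of_bounds hμpos.le hα.1.le (abs_le.mp hetr).2 hdxds1
          (by rwa [← mul_assoc])
    _ = (1 - 0.1 * α) * μ := by ring

/-- Lemma 3.6: sufficient reduction of the duality gap in the long-step method. -/
theorem long_step_gap_reduction
    {n : ℕ} (hn : 0 < n) (dx ds r : Fin n → ℝ) (μ γ σ δ α : ℝ)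
    (hμpos : 0 < μ)
    (hγ : γ ∈ Set.Ioo (0 : ℝ) 1) (hσ : σ ∈ Set.Ioo (0 : ℝ) 1)
    (hδ : δ ∈ Set.Ioo (0 : ℝ) 1) (hα : α ∈ Set.Ioc (0 : ℝ) 1)
    (hetr : |(∑ j, r j) / n| ≤ δ * (1 / γ - σ) * μ)
    (hdxds1 : (∑ j, dx j * ds j) / n ≤ ((1 + δ) ^ 2 / γ) * (1 / γ - σ) ^ 2 * μ)
    (hdxds2 : 0 ≤ ∑ j, dx j * ds j)
    (hcnd : σ + δ * (1 / γ - σ) + α * ((1 + δ) ^ 2 / γ) * (1 / γ - σ) ^ 2 ≤ 0.9) :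
    (1 - α * (1 - σ)) * μ + α * ((∑ j, r j) / n)
        + α ^ 2 * ((∑ j, dx j * ds j) / n)
      ≤ (1 - 0.1 * α) * μ :=
  long_step_gap_reduction_general dx ds r μ γ σ δ α hμpos hα hetr hdxds1 hcnd
end
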